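/- arXiv:1003.3685 — 3 statements merged into one kernel-verified Lean document; each statement's English description precedes it below -/
import Mathlib

section
/- Let S : ℕ → ℕ be defined by S(0) = 1 and, for k ≥ 1, S(k) = k + 1 + ∑_{i=1}^{k} i·S(k−i). Then S(k) is odd if and only if k mod 3 ≠ 2. -/
/-!
Differencing the recurrence twice gives `S (k + 2) + S k = 3 * S (k + 1)`, the recurrence of the
even-indexed Fibonacci numbers, so `S k = F (2k + 2)`. Since `gcd (F 3) (F n) = F (gcd 3 n)` and
`F 3 = 2`, the number `F n` is even exactly when `3 ∣ n`.
-/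

open Finset

theorem Finset.sum_Icc_one_smul_sub {M : Type*} [AddCommMonoid M] (f : ℕ → M) (k : ℕ) :
    ∑ i ∈ Icc 1 k, i • f (k - i) = ∑ j ∈ range k, (k - j) • f j := by
  refine sum_nbij' (k - ·) (k - ·) ?_ ?_ ?_ ?_ ?_ <;> intro i hi <;>
    simp only [mem_Icc, mem_range] at hi ⊢
  iterate 4 omega
  rw [Nat.sub_sub_self hi.2]

theorem Finset.sum_range_succ_sub_smul {M : Type*} [AddCommMonoid M] (f : ℕ → M) (k : ℕ) :
    ∑ j ∈ range (k + 1), (k + 1 - j) • f j =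
      ∑ j ∈ range k, (k - j) • f j + ∑ j ∈ range (k + 1), f j := by
  have h : ∀ j ∈ range (k + 1), (k + 1 - j) • f j = (k - j) • f j + f j := by
    intro j hj
    rw [mem_range] at hj
    rw [← succ_nsmul, Nat.sub_add_comm (by omega)]
  rw [sum_congr rfl h, sum_add_distrib, sum_range_succ (fun j => (k - j) • f j), Nat.sub_self,
    zero_smul, add_zero]

theorem Nat.fib_add_four_add_fib (n : ℕ) : fib (n + 4) + fib n = 3 * fib (n + 2) := by
  have h2 : fib (n + 2) = fib n + fib (n + 1) := fib_add_two
  have h3 : fib (n + 3) = fib (n + 1) + fib (n + 2) := fib_add_two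
  have h4 : fib (n + 4) = fib (n + 2) + fib (n + 3) := fib_add_two
  omega

theorem Nat.even_fib_iff {n : ℕ} : Even (fib n) ↔ 3 ∣ n := by
  have fib_three : fib 3 = 2 := rfl
  rw [even_iff_two_dvd, ← fib_three]
  refine ⟨fun h => ?_, fib_dvd 3 n⟩
  by_contra h3
  have hcop : Nat.gcd 3 n = 1 := (Nat.Prime.coprime_iff_not_dvd Nat.prime_three).mpr h3
  have := fib_gcd 3 n
  rw [hcop, fib_one, Nat.gcd_eq_left h, fib_three] at this
  omega

namespace SLoopCount

variable {S : ℕ → ℕ} (hS0 : S 0 = 1)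
    (hS : ∀ k, 1 ≤ k → S k = k + 1 + ∑ i ∈ Icc 1 k, i * S (k - i))
include hS0 hS

theorem eq_add_one_add_sum_range_sub_mul (k : ℕ) :
    S k = k + 1 + ∑ j ∈ range k, (k - j) * S j := by
  rcases Nat.eq_zero_or_pos k with rfl | hk
  · simp [hS0]
  · simpa only [← smul_eq_mul, sum_Icc_one_smul_sub] using hS k hk

theorem succ_eq_add_one_add_sum_range (k : ℕ) :
    S (k + 1) = S k + 1 + ∑ j ∈ range (k + 1), S j := by
  have h := sum_range_succ_sub_smul S k
  simp only [smul_eq_mul] at h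
  rw [eq_add_one_add_sum_range_sub_mul hS0 hS (k + 1), eq_add_one_add_sum_range_sub_mul hS0 hS k,
    h]
  ring

theorem add_two_add_eq (k : ℕ) : S (k + 2) + S k = 3 * S (k + 1) := by
  have h₁ : S (k + 2) = S (k + 1) + 1 + ∑ j ∈ range (k + 2), S j :=
    succ_eq_add_one_add_sum_range hS0 hS (k + 1)
  have h₀ := succ_eq_add_one_add_sum_range hS0 hS k
  rw [sum_range_succ] at h₁
  omega

theorem eq_fib (k : ℕ) : S k = Nat.fib (2 * k + 2) := by
  induction k using Nat.twoStepInduction with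
  | zero => simp [hS0]
  | one =>
    rw [succ_eq_add_one_add_sum_range hS0 hS 0, sum_range_one, hS0]
    rfl
  | more k ih₀ ih₁ =>
    have h := add_two_add_eq hS0 hS k
    have hfib := Nat.fib_add_four_add_fib (2 * k + 2)
    rw [ih₀, ih₁] at h
    rw [show 2 * (k + 2) + 2 = 2 * k + 2 + 4 by ring]
    rw [show 2 * (k + 1) + 2 = 2 * k + 2 + 2 by ring] at h
    omega

end SLoopCount

theorem stmt_2 (S : ℕ → ℕ) (hS0 : S 0 = 1)
    (hS : ∀ k, 1 ≤ k → S k = k + 1 + ∑ i ∈ Finset.Icc 1 k, i * S (k - i)) :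
    ∀ k, Odd (S k) ↔ k % 3 ≠ 2 := by
  intro k
  rw [SLoopCount.eq_fib hS0 hS k, ← Nat.not_even_iff_odd, Nat.even_fib_iff]
  omega
end

section
/- Let S : ℕ → ℕ be defined by S(0) = 1 and, for k ≥ 1, S(k) = k + 1 + ∑_{i=1}^{k} i·S(k−i). Let p ≥ 3 be an odd natural number and let k = ⌊(p−3)/4⌋. Then S(k) is odd if and only if p is not congruent to 1 or 11 modulo 12. -/
/-! Differencing the recurrence gives `S (k + 1) = S k + 1 + ∑_{j ≤ k} S j`, so modulo 2 the values
`S k` run through `1, 1, 0` periodically; and for odd `p` the index `(p - 3) / 4` is `2` modulo `3`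
exactly when `p ≡ ±1 (mod 12)`. -/

open Finset

lemma sum_Icc_mul_sub_eq_sum_range (f : ℕ → ℕ) (k : ℕ) :
    ∑ i ∈ Icc 1 k, i * f (k - i) = ∑ j ∈ range k, (k - j) * f j := by
  refine sum_nbij' (k - ·) (k - ·) ?_ ?_ ?_ ?_ ?_ <;> intro i hi <;>
    simp only [mem_Icc, mem_range] at hi ⊢
  all_goals first | omega | rw [Nat.sub_sub_self hi.2]

lemma sum_range_succ_sub_mul (f : ℕ → ℕ) (k : ℕ) :
    ∑ j ∈ range (k + 1), (k + 1 - j) * f j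
      = ∑ j ∈ range k, (k - j) * f j + ∑ j ∈ range (k + 1), f j := by
  rw [sum_range_succ, sum_range_succ f, Nat.add_sub_cancel_left, one_mul, ← add_assoc,
    ← sum_add_distrib]
  congr 1
  refine sum_congr rfl fun j hj => ?_
  rw [mem_range] at hj
  rw [Nat.sub_add_comm hj.le, add_one_mul]

section

variable (S : ℕ → ℕ) (hS0 : S 0 = 1)
    (hS : ∀ k, 1 ≤ k → S k = k + 1 + ∑ i ∈ Icc 1 k, i * S (k - i))
include hS0 hS

lemma eq_add_one_add_sum_range_mul (k : ℕ) :
    S k = k + 1 + ∑ j ∈ range k, (k - j) * S j := by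
  rcases Nat.eq_zero_or_pos k with rfl | hk
  · simp [hS0]
  · rw [hS k hk, sum_Icc_mul_sub_eq_sum_range]

lemma succ_eq_add_one_add_sum_range (k : ℕ) :
    S (k + 1) = S k + 1 + ∑ j ∈ range (k + 1), S j := by
  rw [eq_add_one_add_sum_range_mul S hS0 hS (k + 1), eq_add_one_add_sum_range_mul S hS0 hS k,
    sum_range_succ_sub_mul]
  ring

lemma mod_two_and_sum_range_mod_two (k : ℕ) :
    (S k % 2 = 0 ↔ k % 3 = 2) ∧ ((∑ j ∈ range (k + 1), S j) % 2 = 1 ↔ k % 3 = 0) := by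
  induction k with
  | zero => simp [hS0]
  | succ n ih =>
    have hstep := succ_eq_add_one_add_sum_range S hS0 hS n
    have hsum := sum_range_succ S (n + 1)
    omega

end

theorem stmt_8 (S : ℕ → ℕ) (hS0 : S 0 = 1)
    (hS : ∀ k, 1 ≤ k → S k = k + 1 + ∑ i ∈ Finset.Icc 1 k, i * S (k - i))
    (p : ℕ) (hp : 3 ≤ p) (hodd : Odd p) :
    Odd (S ((p - 3) / 4)) ↔ ¬(p % 12 = 1 ∨ p % 12 = 11) := by
  have hpar := (mod_two_and_sum_range_mod_two S hS0 hS ((p - 3) / 4)).1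
  rw [Nat.odd_iff] at hodd ⊢
  omega
end

section
/- Call a finite subset P of {1, 2, ..., n} parity-alternating if, when its elements are listed in increasing order p_1 < p_2 < ... < p_m, one has p_j ≡ j (mod 2) for every j. Then for every k ≥ 0, the number of parity-alternating subsets of {1, 2, ..., 2k+1} of odd cardinality is odd if and only if k mod 3 ≠ 2. -/
/-!
Let `c n r` count the parity-alternating subsets of `{1, …, n}` of cardinality `≡ r (mod 2)`.
Such a subset of `{1, …, n + 1}` either avoids `n + 1`, or is `insert (n + 1) Q` with `Q`
parity-alternating in `{1, …, n}`; then `n + 1` is the `(|Q| + 1)`-st element, so `|Q| ≡ n`.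
Hence `c (n + 1) r = c n r + [n + 1 ≡ r] · c n (n mod 2)`, and two steps give
`(a, b) ↦ (2a + b, a + b)` for `a = c (2k + 1) 1`, `b = c (2k + 1) 0`. Modulo 2 this is
`(a, b) ↦ (b, a + b)`, a map of order 3, and it starts at `(1, 1)` for `k = 0`.
-/

/-- A finite set `P ⊆ {1, …, n}` is *parity-alternating* if, listing its elements in
increasing order as `p₁ < p₂ < ⋯ < p_m`, one has `p_j ≡ j (mod 2)` for every `j`
(so `p₁` is odd, `p₂` is even, and so on). -/
def ParityAlternating (n : ℕ) (P : Finset ℕ) : Prop :=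
  P ⊆ Finset.Icc 1 n ∧
    ∀ j : Fin (P.sort (· ≤ ·)).length, (P.sort (· ≤ ·)).get j % 2 = (j.val + 1) % 2

open Finset

theorem Finset.sort_insert_of_forall_lt {α : Type*} [LinearOrder α] {s : Finset α} {a : α}
    (h : ∀ b ∈ s, b < a) : (insert a s).sort (· ≤ ·) = s.sort (· ≤ ·) ++ [a] := by
  have hl : (s.sort (· ≤ ·) ++ [a]).toFinset = insert a s := by
    ext; simp
  rw [← hl, List.toFinset_sort]
  · simpa [List.pairwise_append] using fun b hb => (h b hb).le
  · simpa [List.nodup_append] using fun ha => lt_irrefl a (h a ha)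

theorem List.forall_fin_append_singleton {α : Type*} (l : List α) (a : α)
    (p : ℕ → α → Prop) :
    (∀ j : Fin (l ++ [a]).length, p j ((l ++ [a]).get j)) ↔
      (∀ j : Fin l.length, p j (l.get j)) ∧ p l.length a := by
  constructor
  · intro h
    refine ⟨fun j => ?_, ?_⟩
    · simpa [List.getElem_append_left j.isLt] using h ⟨j, by simp⟩
    · simpa using h ⟨l.length, by simp⟩
  · rintro ⟨h, ha⟩ ⟨j, hj⟩
    rw [List.length_append, List.length_singleton] at hj
    rcases Nat.lt_succ_iff_lt_or_eq.mp hj with hj | rfl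
    · simpa [List.getElem_append_left hj] using h ⟨j, hj⟩
    · simpa using ha

theorem ParityAlternating.notMem_succ {n : ℕ} {P : Finset ℕ} (h : ParityAlternating n P) :
    n + 1 ∉ P := fun hn => by simpa using (mem_Icc.mp (h.1 hn)).2

theorem parityAlternating_succ_iff_of_notMem {n : ℕ} {P : Finset ℕ} (hP : n + 1 ∉ P) :
    ParityAlternating (n + 1) P ↔ ParityAlternating n P := by
  rw [ParityAlternating, ParityAlternating, ← insert_Icc_right_eq_Icc_add_one (by omega),
    subset_insert_iff_of_notMem hP]

theorem parityAlternating_insert_succ_iff {n : ℕ} {Q : Finset ℕ} (hQ : n + 1 ∉ Q) :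
    ParityAlternating (n + 1) (insert (n + 1) Q) ↔
      ParityAlternating n Q ∧ Q.card % 2 = n % 2 := by
  rw [ParityAlternating, ParityAlternating, ← insert_Icc_right_eq_Icc_add_one (by omega),
    insert_subset_insert_iff hQ, and_assoc]
  refine and_congr_right fun hsub => ?_
  have hlt : ∀ b ∈ Q, b < n + 1 := fun b hb => Nat.lt_succ_of_le (mem_Icc.mp (hsub hb)).2
  rw [sort_insert_of_forall_lt hlt,
    List.forall_fin_append_singleton (p := fun j x => x % 2 = (j + 1) % 2)]
  simp only [length_sort]
  exact and_congr_right' (by omega)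

instance (n : ℕ) : DecidablePred (ParityAlternating n) := fun _ =>
  inferInstanceAs (Decidable (_ ∧ _))

def parityAlternatingSets (n r : ℕ) : Finset (Finset ℕ) :=
  (Icc 1 n).powerset.filter fun P => ParityAlternating n P ∧ P.card % 2 = r

theorem mem_parityAlternatingSets {n r : ℕ} {P : Finset ℕ} :
    P ∈ parityAlternatingSets n r ↔ ParityAlternating n P ∧ P.card % 2 = r := by
  rw [parityAlternatingSets, mem_filter, mem_powerset, and_iff_right_iff_imp]
  exact fun h => h.1.1

theorem card_parityAlternatingSets_zero (r : ℕ) :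
    #(parityAlternatingSets 0 r) = if r = 0 then 1 else 0 := by
  have h0 : ParityAlternating 0 ∅ := ⟨empty_subset _, fun j => absurd j.2 (by simp)⟩
  simp only [parityAlternatingSets, Icc_eq_empty_of_lt zero_lt_one, powerset_empty,
    filter_singleton, card_empty, Nat.zero_mod, eq_comm (a := 0), h0, true_and]
  split_ifs <;> rfl

theorem insert_succ_mem_parityAlternatingSets_iff {n r : ℕ} {Q : Finset ℕ} (hQ : n + 1 ∉ Q) :
    insert (n + 1) Q ∈ parityAlternatingSets (n + 1) r ↔
      Q ∈ parityAlternatingSets n (n % 2) ∧ (n + 1) % 2 = r := by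
  rw [mem_parityAlternatingSets, mem_parityAlternatingSets, parityAlternating_insert_succ_iff hQ,
    card_insert_of_notMem hQ]
  constructor <;> rintro ⟨⟨hPA, hcard⟩, hr⟩ <;> exact ⟨⟨hPA, by omega⟩, by omega⟩

theorem filter_notMem_parityAlternatingSets_succ (n r : ℕ) :
    (parityAlternatingSets (n + 1) r).filter (n + 1 ∉ ·) = parityAlternatingSets n r := by
  ext P
  simp only [mem_filter, mem_parityAlternatingSets]
  constructor
  · rintro ⟨⟨hP, hr⟩, hn⟩
    exact ⟨(parityAlternating_succ_iff_of_notMem hn).mp hP, hr⟩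
  · rintro ⟨hP, hr⟩
    exact ⟨⟨(parityAlternating_succ_iff_of_notMem hP.notMem_succ).mpr hP, hr⟩, hP.notMem_succ⟩

theorem card_filter_mem_parityAlternatingSets_succ (n r : ℕ) :
    #((parityAlternatingSets (n + 1) r).filter (n + 1 ∈ ·)) =
      if (n + 1) % 2 = r then #(parityAlternatingSets n (n % 2)) else 0 := by
  split_ifs with hr
  · refine card_nbij' (erase · (n + 1)) (insert (n + 1)) ?_ ?_ ?_ ?_
    · intro P hP
      obtain ⟨hP, hn⟩ := mem_filter.mp hP
      rw [← insert_erase hn, insert_succ_mem_parityAlternatingSets_iff (notMem_erase _ _)] at hP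
      exact hP.1
    · intro Q hQ
      have hn := (mem_parityAlternatingSets.mp hQ).1.notMem_succ
      exact mem_filter.mpr
        ⟨(insert_succ_mem_parityAlternatingSets_iff hn).mpr ⟨hQ, hr⟩, mem_insert_self _ _⟩
    · intro P hP
      exact insert_erase (mem_filter.mp hP).2
    · intro Q hQ
      exact erase_insert (mem_parityAlternatingSets.mp hQ).1.notMem_succ
  · rw [card_eq_zero, filter_eq_empty_iff]
    intro P hP hn
    rw [← insert_erase hn, insert_succ_mem_parityAlternatingSets_iff (notMem_erase _ _)] at hP
    exact hr hP.2

theorem card_parityAlternatingSets_succ (n r : ℕ) :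
    #(parityAlternatingSets (n + 1) r) =
      #(parityAlternatingSets n r) +
        if (n + 1) % 2 = r then #(parityAlternatingSets n (n % 2)) else 0 := by
  rw [← card_filter_add_card_filter_not (n + 1 ∈ ·), add_comm,
    card_filter_mem_parityAlternatingSets_succ, filter_notMem_parityAlternatingSets_succ]

theorem card_parityAlternatingSets_two_mul_add_three (k : ℕ) :
    #(parityAlternatingSets (2 * k + 3) 1) =
        2 * #(parityAlternatingSets (2 * k + 1) 1) + #(parityAlternatingSets (2 * k + 1) 0) ∧
      #(parityAlternatingSets (2 * k + 3) 0) =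
        #(parityAlternatingSets (2 * k + 1) 1) + #(parityAlternatingSets (2 * k + 1) 0) := by
  have h₁ : #(parityAlternatingSets (2 * k + 3) 1) =
      #(parityAlternatingSets (2 * k + 2) 1) + #(parityAlternatingSets (2 * k + 2) 0) := by
    simpa [Nat.add_mod] using card_parityAlternatingSets_succ (2 * k + 2) 1
  have h₀ : #(parityAlternatingSets (2 * k + 3) 0) = #(parityAlternatingSets (2 * k + 2) 0) := by
    simpa [Nat.add_mod] using card_parityAlternatingSets_succ (2 * k + 2) 0
  have g₁ : #(parityAlternatingSets (2 * k + 2) 1) = #(parityAlternatingSets (2 * k + 1) 1) := by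
    simpa [Nat.add_mod] using card_parityAlternatingSets_succ (2 * k + 1) 1
  have g₀ : #(parityAlternatingSets (2 * k + 2) 0) =
      #(parityAlternatingSets (2 * k + 1) 0) + #(parityAlternatingSets (2 * k + 1) 1) := by
    simpa [Nat.add_mod] using card_parityAlternatingSets_succ (2 * k + 1) 0
  omega

theorem card_parityAlternatingSets_two_mul_add_one_mod_two (k : ℕ) :
    (#(parityAlternatingSets (2 * k + 1) 1) % 2 = 0 ↔ k % 3 = 2) ∧
      (#(parityAlternatingSets (2 * k + 1) 0) % 2 = 0 ↔ k % 3 = 1) := by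
  induction k with
  | zero => simp [card_parityAlternatingSets_succ 0, card_parityAlternatingSets_zero]
  | succ k ih =>
    obtain ⟨h₁, h₀⟩ := card_parityAlternatingSets_two_mul_add_three k
    rw [show 2 * (k + 1) + 1 = 2 * k + 3 by ring, h₁, h₀]
    omega

theorem stmt_13 :
    ∀ k : ℕ,
      Odd (Nat.card {P : Finset ℕ // ParityAlternating (2 * k + 1) P ∧ Odd P.card}) ↔
        k % 3 ≠ 2 := by
  intro k
  have hcard : Nat.card {P : Finset ℕ // ParityAlternating (2 * k + 1) P ∧ Odd P.card} =
      #(parityAlternatingSets (2 * k + 1) 1) := by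
    simp_rw [Nat.odd_iff, ← mem_parityAlternatingSets]
    exact Nat.card_eq_finsetCard _
  rw [hcard, Nat.odd_iff]
  have := (card_parityAlternatingSets_two_mul_add_one_mod_two k).1
  omega
end
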